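/- arXiv:2507.13233 — 5 statements merged into one kernel-verified Lean document; each statement's English description precedes it below -/
import Mathlib

section
/- Let G be a closed subgroup of O(n) such that every G-invariant convex body in R^n is a Euclidean ball centered at the origin. Then G acts transitively on the unit sphere S^{n-1}. -/
/-!
Let `u, v` be unit vectors. The body `K = conv (B(1/2) ∪ G v)` is `G`-invariant, hence a ball
`B(r)`, and `v ∈ K` gives `r ≥ 1`, so `u ∈ K`. As `K` lies in the unit ball, `u` maximizes `⟪u, ·⟫`
on `K`. Since `G v` is compact (`G` is closed in the compact group `O(n)`), this maximum is also
attained at some `z ∈ B(1/2) ∪ G v`, and `⟪u, z⟫ = 1` with `‖z‖ ≤ 1` forces `z = u ∈ G v`.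
-/

open scoped RealInnerProductSpace Pointwise

noncomputable def act {n : ℕ} (g : Matrix.orthogonalGroup (Fin n) ℝ)
    (x : EuclideanSpace ℝ (Fin n)) : EuclideanSpace ℝ (Fin n) :=
  Matrix.toEuclideanLin (g : Matrix (Fin n) (Fin n) ℝ) x

open Metric MulAction

theorem Matrix.isCompact_unitaryGroup {ι 𝕜 : Type*} [Fintype ι] [DecidableEq ι] [RCLike 𝕜] :
    IsCompact (Matrix.unitaryGroup ι 𝕜 : Set (Matrix ι ι 𝕜)) := by
  have hbox : IsCompact (Set.univ.pi fun _ : ι ↦ Set.univ.pi fun _ : ι ↦ closedBall (0 : 𝕜) 1) :=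
    isCompact_univ_pi fun _ ↦ isCompact_univ_pi fun _ ↦ isCompact_closedBall 0 1
  refine hbox.of_isClosed_subset (isClosed_unitary (R := Matrix ι ι 𝕜)) fun U hU i _ j _ ↦ ?_
  exact mem_closedBall_zero_iff.mpr (entry_norm_bound_of_unitary hU i j)

instance {ι 𝕜 : Type*} [Fintype ι] [DecidableEq ι] [RCLike 𝕜] :
    CompactSpace (Matrix.unitaryGroup ι 𝕜) :=
  isCompact_iff_compactSpace.mp Matrix.isCompact_unitaryGroup

theorem LinearIsometryEquiv.image_closure_convexHull {E : Type*} [NormedAddCommGroup E]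
    [NormedSpace ℝ E] (e : E ≃ₗᵢ[ℝ] E) (s : Set E) :
    e '' closure (convexHull ℝ s) = closure (convexHull ℝ (e '' s)) := by
  rw [← e.coe_toHomeomorph, e.toHomeomorph.image_closure, e.coe_toHomeomorph,
    ← e.coe_toLinearEquiv, ← LinearEquiv.coe_toLinearMap, LinearMap.image_convexHull]

theorem mem_of_mem_closure_convexHull_of_norm_eq_one {E : Type*} [NormedAddCommGroup E]
    [InnerProductSpace ℝ E] {s : Set E} (hs : IsCompact s) (hs₁ : s ⊆ closedBall 0 1) {u : E}
    (hu : ‖u‖ = 1) (hus : u ∈ closure (convexHull ℝ s)) : u ∈ s := by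
  have hne : s.Nonempty := convexHull_nonempty_iff.mp (closure_nonempty_iff.mp ⟨u, hus⟩)
  obtain ⟨z, hzs, hzmax⟩ := hs.exists_isMaxOn hne (innerSL ℝ u).continuous.continuousOn
  have hhull : closure (convexHull ℝ s) ⊆ innerSL ℝ u ⁻¹' Set.Iic ⟪u, z⟫ :=
    closure_minimal
      (convexHull_min hzmax ((convex_Iic _).linear_preimage (innerSL ℝ u : E →ₗ[ℝ] ℝ)))
      (isClosed_Iic.preimage (innerSL ℝ u).continuous)
  have hz₁ : ‖z‖ ≤ 1 := mem_closedBall_zero_iff.mp (hs₁ hzs)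
  have huz : ⟪u, z⟫ = 1 := by
    have h₁ : ⟪u, u⟫ ≤ ⟪u, z⟫ := hhull hus
    have h₂ : ⟪u, z⟫ ≤ ‖u‖ * ‖z‖ := real_inner_le_norm u z
    rw [real_inner_self_eq_norm_sq, hu] at h₁
    rw [hu] at h₂
    linarith
  have hz : ‖z‖ = 1 := by
    have := real_inner_le_norm u z
    rw [huz, hu] at this
    linarith
  rwa [(inner_eq_one_iff_of_norm_eq_one hu hz).mp huz]

namespace Matrix.orthogonalGroup

variable {n : ℕ}

noncomputable def toLinearIsometryEquiv : orthogonalGroup (Fin n) ℝ →*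
    (EuclideanSpace ℝ (Fin n) ≃ₗᵢ[ℝ] EuclideanSpace ℝ (Fin n)) :=
  Unitary.linearIsometryEquiv.toMonoidHom.comp
    (Unitary.map (StarMonoidHom.ofClass (toEuclideanCLM (n := Fin n) (𝕜 := ℝ)))).toMonoidHom

theorem coe_toLinearIsometryEquiv (g : orthogonalGroup (Fin n) ℝ) :
    ⇑(toLinearIsometryEquiv g) = act g :=
  rfl

theorem continuous_act_apply (x : EuclideanSpace ℝ (Fin n)) :
    Continuous fun g : orthogonalGroup (Fin n) ℝ ↦ act g x :=
  (PiLp.continuous_toLp 2 _).comp (continuous_subtype_val.matrix_mulVec continuous_const)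

end Matrix.orthogonalGroup

section OrbitBody

open Matrix orthogonalGroup

variable {n : ℕ} (G : Subgroup (orthogonalGroup (Fin n) ℝ))

/-- The body `conv (B(1/2) ∪ G v)`; the hull is already compact, the closure only spares
proving it. The orbit is for Mathlib's action of matrices by `mulVec`, definitionally `act`. -/
noncomputable def orbitBody (v : EuclideanSpace ℝ (Fin n)) : Set (EuclideanSpace ℝ (Fin n)) :=
  closure (convexHull ℝ (closedBall 0 2⁻¹ ∪ orbit G v))

variable {G}

theorem isCompact_orbit (hG : IsClosed (G : Set (orthogonalGroup (Fin n) ℝ)))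
    (v : EuclideanSpace ℝ (Fin n)) : IsCompact (orbit G v) :=
  have : CompactSpace G := isCompact_iff_compactSpace.mp hG.isCompact
  isCompact_range ((continuous_act_apply v).comp continuous_subtype_val)

theorem norm_eq_of_mem_orbit {u v : EuclideanSpace ℝ (Fin n)} (h : u ∈ orbit G v) : ‖u‖ = ‖v‖ := by
  obtain ⟨g, rfl⟩ := h
  exact (toLinearIsometryEquiv (g : orthogonalGroup (Fin n) ℝ)).norm_map v

theorem image_act_orbitBody {g : orthogonalGroup (Fin n) ℝ} (hg : g ∈ G)
    (v : EuclideanSpace ℝ (Fin n)) : act g '' orbitBody G v = orbitBody G v := by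
  have horbit : act g '' orbit G v = orbit G v :=
    Set.image_smul.trans (smul_orbit (⟨g, hg⟩ : G) v)
  rw [orbitBody, ← coe_toLinearIsometryEquiv, LinearIsometryEquiv.image_closure_convexHull,
    Set.image_union, LinearIsometryEquiv.image_closedBall, map_zero, coe_toLinearIsometryEquiv,
    horbit]

theorem convex_orbitBody (v : EuclideanSpace ℝ (Fin n)) : Convex ℝ (orbitBody G v) :=
  (convex_convexHull ℝ _).closure

theorem ball_union_orbit_subset_closedBall {v : EuclideanSpace ℝ (Fin n)} (hv : ‖v‖ ≤ 1) :
    closedBall 0 2⁻¹ ∪ orbit G v ⊆ closedBall 0 1 := by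
  rintro x (hx | hx)
  · exact closedBall_subset_closedBall (by norm_num) hx
  · rwa [mem_closedBall_zero_iff, norm_eq_of_mem_orbit hx]

theorem isCompact_orbitBody {v : EuclideanSpace ℝ (Fin n)} (hv : ‖v‖ ≤ 1) :
    IsCompact (orbitBody G v) :=
  (isCompact_closedBall 0 1).of_isClosed_subset isClosed_closure <|
    closure_minimal (convexHull_min (ball_union_orbit_subset_closedBall hv) (convex_closedBall 0 1))
      isClosed_closedBall

theorem interior_orbitBody_nonempty (v : EuclideanSpace ℝ (Fin n)) :
    (interior (orbitBody G v)).Nonempty :=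
  ⟨0, interior_mono ((Set.subset_union_left.trans (subset_convexHull ℝ _)).trans subset_closure)
    (mem_interior_iff_mem_nhds.mpr (closedBall_mem_nhds 0 (by norm_num)))⟩

theorem mem_orbitBody_self (v : EuclideanSpace ℝ (Fin n)) : v ∈ orbitBody G v :=
  subset_closure (subset_convexHull ℝ _ (Or.inr (mem_orbit_self v)))

theorem mem_orbit_of_mem_orbitBody (hG : IsClosed (G : Set (orthogonalGroup (Fin n) ℝ)))
    {u v : EuclideanSpace ℝ (Fin n)} (hu : ‖u‖ = 1) (hv : ‖v‖ = 1) (h : u ∈ orbitBody G v) :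
    u ∈ orbit G v := by
  have hS := (isCompact_closedBall 0 2⁻¹).union (isCompact_orbit hG v)
  obtain hball | horbit := mem_of_mem_closure_convexHull_of_norm_eq_one hS
    (ball_union_orbit_subset_closedBall hv.le) hu h
  · rw [mem_closedBall_zero_iff, hu] at hball
    norm_num at hball
  · exact horbit

end OrbitBody

/-- If G is a closed subgroup of O(n) such that every G-invariant convex body is a
Euclidean ball centered at the origin, then G acts transitively on the unit sphere. -/
theorem stmt1 {n : ℕ} (G : Subgroup (Matrix.orthogonalGroup (Fin n) ℝ))
    (hGcl : IsClosed (G : Set (Matrix.orthogonalGroup (Fin n) ℝ)))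
    (hball : ∀ K : Set (EuclideanSpace ℝ (Fin n)), IsCompact K → Convex ℝ K →
      (interior K).Nonempty → (∀ g ∈ G, act g '' K = K) →
      ∃ r > 0, K = Metric.closedBall (0 : EuclideanSpace ℝ (Fin n)) r) :
    ∀ u v : EuclideanSpace ℝ (Fin n), ‖u‖ = 1 → ‖v‖ = 1 → ∃ g ∈ G, act g u = v := by
  intro u v hu hv
  obtain ⟨r, -, hr⟩ := hball (orbitBody G v) (isCompact_orbitBody hv.le) (convex_orbitBody v)
    (interior_orbitBody_nonempty v) fun g hg ↦ image_act_orbitBody hg v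
  have hvr : ‖v‖ ≤ r := mem_closedBall_zero_iff.mp (hr ▸ mem_orbitBody_self v)
  have hu_mem : u ∈ orbitBody G v := by
    rwa [hr, mem_closedBall_zero_iff, hu, ← hv]
  obtain ⟨g, hgv⟩ := mem_orbit_of_mem_orbitBody hGcl hu hv hu_mem
  exact ⟨(g⁻¹ : G), (g⁻¹ : G).2, by rw [← hgv]; exact inv_smul_smul g v⟩
end

section
/- Let v be a unit vector in R^n, G a subgroup of O(n), u a unit vector with u not in the orbit Gv. Then u does not belong to conv(B(1/2) ∪ Gv), where B(1/2) is the closed ball of radius 1/2 centered at the origin. -/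
/-! In a strictly convex space a point of norm `r` is an extreme point of the closed ball of
radius `r`, hence of any convex hull of points of norm at most `r` containing it, and extreme
points of a convex hull belong to the generating set. The orbit `Gv` lies on the unit sphere, so a
unit vector in `conv(B(1/2) ∪ Gv)` must lie in `Gv`. -/

open scoped RealInnerProductSpace Pointwise

open Metric in
theorem mem_of_mem_convexHull_of_norm_eq {E : Type*} [NormedAddCommGroup E] [NormedSpace ℝ E]
    [StrictConvexSpace ℝ E] {s : Set E} {r : ℝ} {x : E} (hs : s ⊆ closedBall 0 r)
    (hx : x ∈ convexHull ℝ s) (hxr : ‖x‖ = r) (hr : r ≠ 0) : x ∈ s := by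
  have hball : x ∈ (closedBall (0 : E) r).extremePoints ℝ :=
    StrictConvexSpace.sphere_subset_extremePoints_closedBall 0 hr (by simpa using hxr)
  have hhull : convexHull ℝ s ⊆ closedBall 0 r := convexHull_min hs (convex_closedBall 0 r)
  exact extremePoints_convexHull_subset (inter_extremePoints_subset_extremePoints_of_subset hhull
    ⟨hx, hball⟩)

theorem norm_act {n : ℕ} (g : Matrix.orthogonalGroup (Fin n) ℝ) (x : EuclideanSpace ℝ (Fin n)) :
    ‖act g x‖ = ‖x‖ := by
  have hg : Matrix.toEuclideanCLM (n := Fin n) (𝕜 := ℝ) g ∈ unitary _ := Unitary.map_mem _ g.2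
  exact ContinuousLinearMap.norm_map_of_mem_unitary hg x

/-- If u is a unit vector not in the orbit Gv of a unit vector v, then u is not in
the convex hull of the union of the ball of radius 1/2 with the orbit Gv. -/
theorem stmt2 {n : ℕ} (G : Subgroup (Matrix.orthogonalGroup (Fin n) ℝ))
    (v u : EuclideanSpace ℝ (Fin n)) (hv : ‖v‖ = 1) (hu : ‖u‖ = 1)
    (hne : ∀ g ∈ G, act g v ≠ u) :
    u ∉ convexHull ℝ
      (Metric.closedBall (0 : EuclideanSpace ℝ (Fin n)) (1/2) ∪
        {x | ∃ g ∈ G, act g v = x}) := by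
  intro hmem
  have hsub : Metric.closedBall (0 : EuclideanSpace ℝ (Fin n)) (1/2) ∪
      {x | ∃ g ∈ G, act g v = x} ⊆ Metric.closedBall 0 1 := by
    rintro x (hx | ⟨g, -, rfl⟩)
    · exact Metric.closedBall_subset_closedBall (by norm_num) hx
    · simp [norm_act, hv]
  rcases mem_of_mem_convexHull_of_norm_eq hsub hmem hu one_ne_zero with hball | ⟨g, hg, hgv⟩
  · rw [Metric.mem_closedBall, dist_zero_right, hu] at hball
    norm_num at hball
  · exact hne g hg hgv
end

section
/- Let G be a closed subgroup of O(n). Every G-invariant convex body is origin-symmetric if and only if for every x in R^n, -x belongs to the orbit Gx. -/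
/-! If `-x ∉ Gx`, the orbit `Gx` is compact (as `G` is a closed subgroup of the compact group
`O(n)`) and lies on the sphere of radius `‖x‖`, as does `-x`. On the closed convex hull of
`B(‖x‖/2) ∪ Gx` the functional `⟪-x, ·⟫` is bounded by its maximum over the orbit, which is
`< ‖x‖²` by the equality case of Cauchy–Schwarz; so this `G`-invariant convex body contains `x`
but not `-x`. Conversely, if `gz = -z` with `g ∈ G`, then `-z ∈ gK = K` for every `G`-invariant
`K ∋ z`. -/

open scoped RealInnerProductSpace Pointwise

open Metric Set

namespace Matrix

variable {𝕜 ι : Type*} [RCLike 𝕜] [Fintype ι] [DecidableEq ι]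

theorem isCompact_unitaryGroup_s6 : IsCompact (unitaryGroup ι 𝕜 : Set (Matrix ι ι 𝕜)) := by
  -- stated outside the scope below, whose norm hides the topological ring structure
  have hclosed : IsClosed (unitaryGroup ι 𝕜 : Set (Matrix ι ι 𝕜)) := isClosed_unitary
  open scoped Matrix.Norms.Elementwise in
  exact isCompact_of_isClosed_isBounded hclosed <|
    isBounded_iff_forall_norm_le.2 ⟨1, fun _ hU => entrywise_sup_norm_bound_of_unitary hU⟩

instance : CompactSpace (unitaryGroup ι 𝕜) :=
  isCompact_iff_compactSpace.mp isCompact_unitaryGroup_s6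

noncomputable def UnitaryGroup.toLinearIsometryEquiv :
    unitaryGroup ι 𝕜 →* (EuclideanSpace 𝕜 ι ≃ₗᵢ[𝕜] EuclideanSpace 𝕜 ι) where
  toFun U :=
    Unitary.linearIsometryEquiv ⟨toEuclideanCLM (n := ι) (𝕜 := 𝕜) U, Unitary.map_mem _ U.2⟩
  map_one' := by
    ext x : 1
    change toEuclideanCLM (n := ι) (𝕜 := 𝕜) 1 x = x
    simp
  map_mul' U V := by
    ext x : 1
    change toEuclideanCLM (n := ι) (𝕜 := 𝕜) (U * V : Matrix ι ι 𝕜) x =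
      toEuclideanCLM (n := ι) (𝕜 := 𝕜) U (toEuclideanCLM (n := ι) (𝕜 := 𝕜) V x)
    simp

theorem UnitaryGroup.toLinearIsometryEquiv_apply (U : unitaryGroup ι 𝕜)
    (x : EuclideanSpace 𝕜 ι) :
    toLinearIsometryEquiv U x = toEuclideanLin (U : Matrix ι ι 𝕜) x :=
  rfl

theorem UnitaryGroup.continuous_toLinearIsometryEquiv_apply (x : EuclideanSpace 𝕜 ι) :
    Continuous fun U : unitaryGroup ι 𝕜 => toLinearIsometryEquiv U x := by
  simp only [toLinearIsometryEquiv_apply, toLpLin_apply]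
  fun_prop

end Matrix

theorem LinearIsometryEquiv.image_closedConvexHull {E F : Type*} [NormedAddCommGroup E]
    [NormedSpace ℝ E] [NormedAddCommGroup F] [NormedSpace ℝ F] (f : E ≃ₗᵢ[ℝ] F) (s : Set E) :
    f '' closedConvexHull ℝ s = closedConvexHull ℝ (f '' s) := by
  simp only [closedConvexHull_eq_closure_convexHull]
  exact (f.toHomeomorph.image_closure _).trans
    (congrArg closure (f.toLinearEquiv.toLinearMap.image_convexHull s))

theorem eq_neg_of_forall_exists_apply_eq_neg {α Γ : Type*} [InvolutiveNeg α] (f : Γ → α → α)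
    {G : Set Γ} {K : Set α} (hK : ∀ g ∈ G, f g '' K = K)
    (hneg : ∀ z ∈ K, ∃ g ∈ G, f g z = -z) : K = -K := by
  have hsub : K ⊆ -K := fun z hz => by
    obtain ⟨g, hg, hgz⟩ := hneg z hz
    rw [mem_neg, ← hgz, ← hK g hg]
    exact mem_image_of_mem _ hz
  exact hsub.antisymm (neg_subset.2 hsub)

section InnerProductSpace

variable {E : Type*} [NormedAddCommGroup E] [InnerProductSpace ℝ E]

theorem inner_lt_norm_sq_of_norm_le {p y : E} (hy : ‖y‖ ≤ ‖p‖) (hyp : y ≠ p) :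
    ⟪p, y⟫ < ‖p‖ ^ 2 := by
  have hdist : 0 < ‖p - y‖ := norm_pos_iff.2 (sub_ne_zero.2 hyp.symm)
  have := norm_sub_sq_real p y
  nlinarith [norm_nonneg y]

theorem mem_of_mem_closedConvexHull_of_subset_closedBall {S : Set E} {p : E} (hS : IsCompact S)
    (hSp : S ⊆ closedBall 0 ‖p‖) (hp : p ∈ closedConvexHull ℝ S) : p ∈ S := by
  rcases S.eq_empty_or_nonempty with rfl | hne
  · simp [closedConvexHull_eq_closure_convexHull] at hp
  by_contra hpS
  obtain ⟨y₀, hy₀, hmax⟩ := hS.exists_isMaxOn hne (f := (⟪p, ·⟫)) (by fun_prop)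
  have hhull : closedConvexHull ℝ S ⊆ {y | ⟪p, y⟫ ≤ ⟪p, y₀⟫} :=
    closedConvexHull_min (fun y hy => hmax hy)
      (convex_halfSpace_le (innerₛₗ ℝ p).isLinear _)
      (isClosed_le (continuous_const.inner continuous_id) continuous_const)
  have hlt : ⟪p, y₀⟫ < ‖p‖ ^ 2 := inner_lt_norm_sq_of_norm_le
    (mem_closedBall_zero_iff.1 (hSp hy₀)) (ne_of_mem_of_not_mem hy₀ hpS)
  have hle : ⟪p, p⟫ ≤ ⟪p, y₀⟫ := hhull hp
  rw [real_inner_self_eq_norm_sq] at hle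
  linarith

theorem image_orbit_eq_orbit {Γ : Type*} [Group Γ] (ρ : Γ →* (E ≃ₗᵢ[ℝ] E)) {G : Subgroup Γ}
    {g : Γ} (hg : g ∈ G) (x : E) : ρ g '' ((ρ · x) '' G) = (ρ · x) '' G := by
  rw [image_image]
  ext y
  constructor
  · rintro ⟨h, hh, rfl⟩
    exact ⟨g * h, G.mul_mem hg hh, by simp⟩
  · rintro ⟨h, hh, rfl⟩
    exact ⟨g⁻¹ * h, G.mul_mem (G.inv_mem hg) hh, by simp⟩

variable [FiniteDimensional ℝ E]

theorem neg_mem_of_forall_invariant_convexBody_eq_neg {Γ : Type*} (ρ : Γ → E ≃ₗᵢ[ℝ] E)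
    {G : Set Γ} (hbody : ∀ K : Set E, IsCompact K → Convex ℝ K → (interior K).Nonempty →
      (∀ g ∈ G, ρ g '' K = K) → K = -K)
    {O : Set E} (hO : IsCompact O) (hOinv : ∀ g ∈ G, ρ g '' O = O) {x : E} (hx : x ∈ O)
    (hOx : O ⊆ closedBall 0 ‖x‖) : -x ∈ O := by
  rcases eq_or_ne x 0 with rfl | hx0
  · simpa using hx
  have hxpos : 0 < ‖x‖ := norm_pos_iff.2 hx0
  set S := closedBall (0 : E) (‖x‖ / 2) ∪ O
  have hSx : S ⊆ closedBall 0 ‖x‖ :=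
    union_subset (closedBall_subset_closedBall (by linarith)) hOx
  have hK : closedConvexHull ℝ S = -closedConvexHull ℝ S := by
    refine hbody _ ?_ convex_closedConvexHull ?_ ?_
    · exact isCompact_of_isClosed_isBounded isClosed_closedConvexHull <|
        isBounded_closedBall.subset <|
          closedConvexHull_min hSx (convex_closedBall _ _) isClosed_closedBall
    · exact ⟨0, interior_mono (subset_union_left.trans subset_closedConvexHull) <|
        mem_interior_iff_mem_nhds.2 (closedBall_mem_nhds 0 (by positivity))⟩
    · intro g hg
      rw [LinearIsometryEquiv.image_closedConvexHull, image_union, hOinv g hg,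
        LinearIsometryEquiv.image_closedBall, map_zero]
  have hnegS : -x ∈ S := by
    refine mem_of_mem_closedConvexHull_of_subset_closedBall ((isCompact_closedBall _ _).union hO)
      (by rwa [norm_neg]) ?_
    rw [hK]
    exact neg_mem_neg.2 (subset_closedConvexHull (Or.inr hx))
  rcases hnegS with hball | hO
  · rw [mem_closedBall_zero_iff, norm_neg] at hball
    linarith
  · exact hO

theorem exists_apply_eq_neg_of_forall_invariant_convexBody_eq_neg {Γ : Type*} [Group Γ]
    [TopologicalSpace Γ] (ρ : Γ →* (E ≃ₗᵢ[ℝ] E)) (hρ : ∀ x, Continuous (ρ · x))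
    {G : Subgroup Γ} (hG : IsCompact (G : Set Γ))
    (hbody : ∀ K : Set E, IsCompact K → Convex ℝ K → (interior K).Nonempty →
      (∀ g ∈ G, ρ g '' K = K) → K = -K) (x : E) :
    ∃ g ∈ G, ρ g x = -x := by
  have horbit : -x ∈ (ρ · x) '' G :=
    neg_mem_of_forall_invariant_convexBody_eq_neg ρ hbody (hG.image (hρ x))
      (fun _ hg => image_orbit_eq_orbit ρ hg x) ⟨1, G.one_mem, by simp⟩
      (by rintro _ ⟨g, -, rfl⟩; simp)
  simpa using horbit

end InnerProductSpace

/-- For a closed subgroup G of O(n): every G-invariant convex body is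
origin-symmetric iff -x belongs to the orbit Gx for every x. -/
theorem stmt6 {n : ℕ} (G : Subgroup (Matrix.orthogonalGroup (Fin n) ℝ))
    (hGcl : IsClosed (G : Set (Matrix.orthogonalGroup (Fin n) ℝ))) :
    (∀ K : Set (EuclideanSpace ℝ (Fin n)), IsCompact K → Convex ℝ K →
        (interior K).Nonempty → (∀ g ∈ G, act g '' K = K) → K = -K) ↔
    (∀ x : EuclideanSpace ℝ (Fin n), ∃ g ∈ G, act g x = -x) := by
  have hact : ∀ g : Matrix.orthogonalGroup (Fin n) ℝ,
      act g = Matrix.UnitaryGroup.toLinearIsometryEquiv g := fun _ => rfl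
  simp only [hact]
  constructor
  · exact exists_apply_eq_neg_of_forall_invariant_convexBody_eq_neg _
      Matrix.UnitaryGroup.continuous_toLinearIsometryEquiv_apply hGcl.isCompact
  · intro horbit K _ _ _ hK
    exact eq_neg_of_forall_exists_apply_eq_neg _ hK fun z _ => horbit z
end

section
/- Let G be a finite subgroup of O(n). Then for every x in R^n there exists g in G with gx = -x if and only if -I is an element of G. -/
open scoped RealInnerProductSpace Pointwise

lemma toEuclideanLin_neg_one {n : ℕ} (x : EuclideanSpace ℝ (Fin n)) :
    Matrix.toEuclideanLin (-1 : Matrix (Fin n) (Fin n) ℝ) x = -x := by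
  simp [Matrix.toEuclideanLin_apply]

/-- For a finite subgroup G of O(n): every x satisfies -x ∈ Gx iff -I ∈ G. -/
theorem stmt7 {n : ℕ} (G : Subgroup (Matrix.orthogonalGroup (Fin n) ℝ))
    (hfin : (G : Set (Matrix.orthogonalGroup (Fin n) ℝ)).Finite) :
    (∀ x : EuclideanSpace ℝ (Fin n), ∃ g ∈ G, act g x = -x) ↔
    (∃ g ∈ G, (g : Matrix (Fin n) (Fin n) ℝ) = -1) := by
  constructor
  · intro h
    have : Finite G := hfin.to_subtype
    set V : G → Subspace ℝ (EuclideanSpace ℝ (Fin n)) :=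
      fun g => LinearMap.ker
        (Matrix.toEuclideanLin ((g.1 : Matrix (Fin n) (Fin n) ℝ)) + LinearMap.id) with hV
    have hcov : ⋃ g, (V g : Set (EuclideanSpace ℝ (Fin n))) = Set.univ := by
      apply Set.eq_univ_of_forall
      intro x
      obtain ⟨g, hg, hgx⟩ := h x
      refine Set.mem_iUnion.2 ⟨⟨g, hg⟩, ?_⟩
      simp only [hV, SetLike.mem_coe, LinearMap.mem_ker, LinearMap.add_apply, LinearMap.id_apply]
      rw [show Matrix.toEuclideanLin (g : Matrix (Fin n) (Fin n) ℝ) x = act g x from rfl, hgx]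
      simp
    obtain ⟨g, hg⟩ := Subspace.exists_eq_top_of_iUnion_eq_univ hcov
    refine ⟨g.1, g.2, ?_⟩
    have : Matrix.toEuclideanLin ((g.1 : Matrix (Fin n) (Fin n) ℝ)) =
        Matrix.toEuclideanLin (-1) := by
      ext x : 1
      have hx : x ∈ V g := hg ▸ Submodule.mem_top
      simp only [hV, LinearMap.mem_ker, LinearMap.add_apply, LinearMap.id_apply] at hx
      rw [toEuclideanLin_neg_one]
      linear_combination (norm := module) hx
    exact Matrix.toEuclideanLin.injective this
  · rintro ⟨g, hg, hg1⟩ x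
    exact ⟨g, hg, by rw [act, hg1, toEuclideanLin_neg_one]⟩
end

section
/- Let G be a closed subgroup of O(n), n ≥ 2. Then G acts irreducibly on R^n (i.e., the only G-invariant linear subspaces are {0} and R^n) if and only if for every unit vector v, the orbit Gv is not contained in any closed hemisphere {x in S^{n-1} : <x,u> ≥ 0}, u a unit vector. -/
/-!
The closed hemispheres containing the orbit `G v` have their poles in a compact, `G`-invariant
subset `A` of the unit sphere. If `A` is nonempty, the point of least norm of the (compact) convex
hull of `A` is unique, hence fixed by `G`, hence zero when `G` acts irreducibly on a space of
dimension `≠ 1`. Writing `0` as a convex combination of poles, a pole `u` with positive weight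
satisfies `⟪g v, u⟫ = 0` for all `g`, so `u` is orthogonal to the span of the orbit, which is
everything by irreducibility: a contradiction. Conversely, a proper nonzero invariant subspace `V`
traps the orbit of a unit vector of `V` in the equator orthogonal to a unit vector of `Vᗮ`.
-/

open scoped RealInnerProductSpace Pointwise

open Module Set

theorem exists_mem_stdSimplex_sum_smul_eq_of_mem_convexHull {𝕜 E : Type*} [Field 𝕜]
    [LinearOrder 𝕜] [IsStrictOrderedRing 𝕜] [AddCommGroup E] [Module 𝕜 E] [FiniteDimensional 𝕜 E]
    {s : Set E} {x : E} (hx : x ∈ convexHull 𝕜 s) :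
    ∃ w ∈ stdSimplex 𝕜 (Fin (finrank 𝕜 E + 1)), ∃ z : Fin (finrank 𝕜 E + 1) → E,
      (∀ j, z j ∈ s) ∧ ∑ j, w j • z j = x := by
  obtain ⟨x₀, hx₀⟩ : s.Nonempty := convexHull_nonempty_iff.1 ⟨x, hx⟩
  obtain ⟨ι, _, z, w, hzs, hind, hw, hw1, rfl⟩ := eq_pos_convex_span_of_mem_convexHull hx
  have hcard : Fintype.card ι ≤ finrank 𝕜 E + 1 :=
    hind.card_le_finrank_succ.trans (by gcongr; exact Submodule.finrank_le _)
  obtain ⟨e⟩ := Function.Embedding.nonempty_of_card_le (β := Fin (finrank 𝕜 E + 1))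
    (by simpa using hcard)
  -- Carathéodory's family, padded with zero weights to `finrank 𝕜 E + 1` points.
  set w' := Function.extend e w 0
  set z' := Function.extend e z fun _ => x₀
  have hw' : ∀ j ∉ range e, w' j = 0 := fun j hj => Function.extend_apply' _ _ _ hj
  have hz' : ∀ j, z' j ∈ s := fun j => by
    by_cases hj : j ∈ range e
    · obtain ⟨i, rfl⟩ := hj
      simpa [z', e.injective.extend_apply] using hzs (mem_range_self i)
    · simpa [z', Function.extend_apply' _ _ _ hj] using hx₀
  refine ⟨w', ⟨fun j => ?_, ?_⟩, z', hz', ?_⟩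
  · by_cases hj : j ∈ range e
    · obtain ⟨i, rfl⟩ := hj
      simpa [w', e.injective.extend_apply] using (hw i).le
    · exact (hw' j hj).ge
  · rw [← hw1]
    exact (Fintype.sum_of_injective e e.injective w w' hw'
      fun i => (e.injective.extend_apply _ _ _).symm).symm
  · refine (Fintype.sum_of_injective e e.injective _ _ (fun j hj => by simp [hw' j hj])
      fun i => ?_).symm
    simp [w', z', e.injective.extend_apply]

theorem IsCompact.convexHull {E : Type*} [NormedAddCommGroup E] [NormedSpace ℝ E]
    [FiniteDimensional ℝ E] {s : Set E} (hs : IsCompact s) : IsCompact (convexHull ℝ s) := by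
  let N := finrank ℝ E + 1
  have hcombo : _root_.convexHull ℝ s =
      (fun p : (Fin N → ℝ) × (Fin N → E) => ∑ j, p.1 j • p.2 j) ''
        (stdSimplex ℝ (Fin N) ×ˢ univ.pi fun _ => s) := by
    refine Subset.antisymm (fun x hx => ?_) ?_
    · obtain ⟨w, hw, z, hz, rfl⟩ := exists_mem_stdSimplex_sum_smul_eq_of_mem_convexHull hx
      exact ⟨(w, z), ⟨hw, fun j _ => hz j⟩, rfl⟩
    · rintro _ ⟨⟨w, z⟩, ⟨⟨hw₀, hw₁⟩, hz⟩, rfl⟩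
      exact mem_convexHull_of_exists_fintype w z hw₀ hw₁ (fun j => hz j (mem_univ j)) rfl
  rw [hcombo]
  exact ((isCompact_stdSimplex ℝ _).prod (isCompact_univ_pi fun _ => hs)).image (by fun_prop)

theorem Convex.exists_isFixedPt_of_isCompact {E ι : Type*} [NormedAddCommGroup E]
    [NormedSpace ℝ E] [StrictConvexSpace ℝ E] {C : Set E} (hC : Convex ℝ C) (hCc : IsCompact C)
    (hne : C.Nonempty) (f : ι → E → E) (hf : ∀ i x, ‖f i x‖ = ‖x‖)
    (hmaps : ∀ i, MapsTo (f i) C C) :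
    ∃ p ∈ C, ∀ i, Function.IsFixedPt (f i) p := by
  obtain ⟨p, hp, hmin⟩ := hCc.exists_isMinOn hne continuous_norm.continuousOn
  refine ⟨p, hp, fun i => ?_⟩
  -- By strict convexity the midpoint of `p` and `f i p ≠ p` would be shorter than `p`.
  by_contra hne
  have hmid : (1 / 2 : ℝ) • (p + f i p) ∈ C := by
    simpa [smul_add] using hC hp (hmaps i hp) (by norm_num) (by norm_num) (by norm_num)
  exact ((norm_midpoint_lt_iff (hf i p).symm).2 (Ne.symm hne)).not_ge (hmin hmid)

theorem exists_mem_forall_eq_zero_of_zero_mem_convexHull {𝕜 E ι : Type*} [Field 𝕜]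
    [LinearOrder 𝕜] [IsStrictOrderedRing 𝕜] [AddCommGroup E] [Module 𝕜 E] {s : Set E}
    (h0 : 0 ∈ convexHull 𝕜 s) (φ : ι → E →ₗ[𝕜] 𝕜)
    (hφ : ∀ i, ∀ x ∈ s, 0 ≤ φ i x) : ∃ x ∈ s, ∀ i, φ i x = 0 := by
  obtain ⟨κ, _, w, z, hw₀, hw₁, hz, h0⟩ := mem_convexHull_iff_exists_fintype.1 h0
  obtain ⟨k, -, hk⟩ := Finset.exists_lt_of_sum_lt (f := 0) (g := w) (s := Finset.univ)
    (by simp [hw₁])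
  refine ⟨z k, hz k, fun i => ?_⟩
  have hsum : ∑ j, w j * φ i (z j) = 0 := by
    simpa [h0] using (map_sum (φ i) (fun j => w j • z j) Finset.univ).symm
  have hterm := (Finset.sum_eq_zero_iff_of_nonneg fun j _ =>
    mul_nonneg (hw₀ j) (hφ i _ (hz j))).1 hsum k (Finset.mem_univ k)
  exact (mul_eq_zero.1 hterm).resolve_left hk.ne'

section OrthogonalRepresentation

variable {E Γ : Type*} [NormedAddCommGroup E] [InnerProductSpace ℝ E] [Group Γ]
  (ρ : Γ →* (E ≃ₗᵢ[ℝ] E))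

def hemispherePoles (v : E) : Set E := {u | ‖u‖ = 1 ∧ ∀ g, 0 ≤ ⟪ρ g v, u⟫}

variable {ρ}

theorem isCompact_hemispherePoles [FiniteDimensional ℝ E] (v : E) :
    IsCompact (hemispherePoles ρ v) := by
  have : hemispherePoles ρ v = Metric.sphere 0 1 ∩ ⋂ g, {u | 0 ≤ ⟪ρ g v, u⟫} := by
    ext u
    simp [hemispherePoles]
  rw [this]
  exact (isCompact_sphere 0 1).inter_right
    (isClosed_iInter fun g => isClosed_le continuous_const (continuous_const.inner continuous_id))

theorem map_mem_hemispherePoles {v u : E} (g : Γ) (hu : u ∈ hemispherePoles ρ v) :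
    ρ g u ∈ hemispherePoles ρ v := by
  refine ⟨(ρ g).norm_map u ▸ hu.1, fun h => ?_⟩
  have : ρ h v = ρ g (ρ (g⁻¹ * h) v) := by
    rw [← Function.comp_apply (f := ρ g), ← LinearIsometryEquiv.coe_mul, ← map_mul,
      mul_inv_cancel_left]
  rw [this, LinearIsometryEquiv.inner_map_map]
  exact hu.2 _

theorem exists_fixed_mem_convexHull_hemispherePoles [FiniteDimensional ℝ E] {v : E}
    (hne : (hemispherePoles ρ v).Nonempty) :
    ∃ p ∈ convexHull ℝ (hemispherePoles ρ v), ∀ g, ρ g p = p := by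
  refine (convex_convexHull ℝ _).exists_isFixedPt_of_isCompact
    (isCompact_hemispherePoles v).convexHull hne.convexHull (fun g => ρ g)
    (fun g => (ρ g).norm_map) fun g => ?_
  rw [mapsTo_iff_image_subset]
  exact ((ρ g : E →ₗ[ℝ] E).image_convexHull _).trans_subset
    (convexHull_mono (image_subset_iff.2 fun _ => map_mem_hemispherePoles g))

section Irreducible

variable (hirr : ∀ V : Submodule ℝ E, (∀ g, V.map (ρ g : E →ₗ[ℝ] E) = V) → V = ⊥ ∨ V = ⊤)
include hirr

theorem eq_zero_of_forall_map_eq (hdim : finrank ℝ E ≠ 1) {p : E} (hp : ∀ g, ρ g p = p) :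
    p = 0 := by
  by_contra hp0
  have hinv : ∀ g, (ℝ ∙ p).map (ρ g : E →ₗ[ℝ] E) = ℝ ∙ p := fun g => by
    rw [Submodule.map_span, image_singleton]
    exact congrArg _ (congrArg _ (hp g))
  rcases hirr _ hinv with h | h
  · exact hp0 (Submodule.span_singleton_eq_bot.1 h)
  · exact hdim (by rw [← finrank_top ℝ E, ← h, finrank_span_singleton hp0])

theorem span_orbit_eq_top {v : E} (hv : v ≠ 0) :
    Submodule.span ℝ (range fun g => ρ g v) = ⊤ := by
  refine (hirr _ fun g => ?_).resolve_left fun h => hv ?_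
  · rw [Submodule.map_span, ← range_comp]
    refine congrArg _ (Eq.trans ?_ ((Equiv.mulLeft g).surjective.range_comp _))
    congr 1
    ext h
    simp
  · rw [← Submodule.mem_bot ℝ, ← h]
    exact Submodule.subset_span ⟨1, by simp⟩

theorem eq_zero_of_forall_inner_orbit_eq_zero {v u : E} (hv : v ≠ 0)
    (hu : ∀ g, ⟪ρ g v, u⟫ = 0) : u = 0 := by
  have hle : Submodule.span ℝ (range fun g => ρ g v) ≤ LinearMap.ker (innerₛₗ ℝ u) :=
    Submodule.span_le.2 <| by rintro _ ⟨g, rfl⟩; simpa [real_inner_comm] using hu g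
  rw [span_orbit_eq_top hirr hv] at hle
  exact inner_self_eq_zero.1 (hle Submodule.mem_top)

theorem hemispherePoles_eq_empty [FiniteDimensional ℝ E] (hdim : finrank ℝ E ≠ 1) {v : E}
    (hv : v ≠ 0) : hemispherePoles ρ v = ∅ := by
  by_contra hne
  obtain ⟨p, hp, hfix⟩ :=
    exists_fixed_mem_convexHull_hemispherePoles (nonempty_iff_ne_empty.2 hne)
  rw [eq_zero_of_forall_map_eq hirr hdim hfix] at hp
  obtain ⟨u, hu, hvu⟩ := exists_mem_forall_eq_zero_of_zero_mem_convexHull hp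
    (fun g => innerₛₗ ℝ (ρ g v)) fun g _ hu => hu.2 g
  have hu0 := eq_zero_of_forall_inner_orbit_eq_zero hirr hv hvu
  simp [hu0, hemispherePoles] at hu

end Irreducible

theorem exists_hemispherePoles_nonempty_of_invariant [FiniteDimensional ℝ E]
    {V : Submodule ℝ E} (hV : ∀ g, V.map (ρ g : E →ₗ[ℝ] E) = V) (hV₀ : V ≠ ⊥) (hV₁ : V ≠ ⊤) :
    ∃ v, ‖v‖ = 1 ∧ (hemispherePoles ρ v).Nonempty := by
  obtain ⟨v, hvV, hv0⟩ := Submodule.exists_mem_ne_zero_of_ne_bot hV₀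
  obtain ⟨u, huV, hu0⟩ := Submodule.exists_mem_ne_zero_of_ne_bot
    fun h => hV₁ (Submodule.orthogonal_eq_bot_iff.1 h)
  refine ⟨‖v‖⁻¹ • v, norm_smul_inv_norm hv0, ‖u‖⁻¹ • u, norm_smul_inv_norm hu0, fun g => ?_⟩
  have hgv : ρ g (‖v‖⁻¹ • v) ∈ V := hV g ▸ Submodule.mem_map_of_mem (V.smul_mem _ hvV)
  rw [Submodule.inner_right_of_mem_orthogonal hgv (Vᗮ.smul_mem _ huV)]

theorem irreducible_iff_forall_hemispherePoles_eq_empty [FiniteDimensional ℝ E]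
    (hdim : finrank ℝ E ≠ 1) :
    (∀ V : Submodule ℝ E, (∀ g, V.map (ρ g : E →ₗ[ℝ] E) = V) → V = ⊥ ∨ V = ⊤) ↔
      ∀ v : E, ‖v‖ = 1 → hemispherePoles ρ v = ∅ := by
  refine ⟨fun hirr v hv => hemispherePoles_eq_empty hirr hdim (norm_ne_zero_iff.1 (by simp [hv])),
    fun h V hV => ?_⟩
  by_contra! hV'
  obtain ⟨v, hv, hne⟩ := exists_hemispherePoles_nonempty_of_invariant hV hV'.1 hV'.2
  exact hne.ne_empty (h v hv)

end OrthogonalRepresentation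

noncomputable def Matrix.orthogonalGroup.toLinearIsometryEquiv_s12 (n : ℕ) :
    Matrix.orthogonalGroup (Fin n) ℝ →*
      (EuclideanSpace ℝ (Fin n) ≃ₗᵢ[ℝ] EuclideanSpace ℝ (Fin n)) :=
  Unitary.linearIsometryEquiv.toMonoidHom.comp
    (Unitary.map (StarMonoidHom.ofClass (Matrix.toEuclideanCLM (n := Fin n) (𝕜 := ℝ)))).toMonoidHom

theorem stmt12_general {n : ℕ} (hn : 2 ≤ n) (G : Subgroup (Matrix.orthogonalGroup (Fin n) ℝ)) :
    (∀ V : Submodule ℝ (EuclideanSpace ℝ (Fin n)),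
        (∀ g ∈ G, V.map (Matrix.toEuclideanLin (g : Matrix (Fin n) (Fin n) ℝ)) = V) →
        V = ⊥ ∨ V = ⊤) ↔
    (∀ v : EuclideanSpace ℝ (Fin n), ‖v‖ = 1 →
      ¬ ∃ u : EuclideanSpace ℝ (Fin n), ‖u‖ = 1 ∧ ∀ g ∈ G, 0 ≤ ⟪act g v, u⟫) := by
  have hdim : finrank ℝ (EuclideanSpace ℝ (Fin n)) ≠ 1 := by
    rw [finrank_euclideanSpace_fin]; omega
  -- `toLinearIsometryEquiv n g` is `Matrix.toEuclideanLin g`, i.e. `act g`, definitionally.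
  refine Iff.trans ?_ ((irreducible_iff_forall_hemispherePoles_eq_empty
    (ρ := (Matrix.orthogonalGroup.toLinearIsometryEquiv_s12 n).comp G.subtype) hdim).trans ?_)
  · exact forall_congr' fun V => imp_congr_left ⟨fun h g => h g g.2, fun h g hg => h ⟨g, hg⟩⟩
  · refine forall_congr' fun v => imp_congr_right fun _ => ?_
    rw [eq_empty_iff_forall_notMem, ← not_exists]
    exact not_congr ⟨fun ⟨u, hu, hg⟩ => ⟨u, hu, fun g hg' => hg ⟨g, hg'⟩⟩,
      fun ⟨u, hu, hg⟩ => ⟨u, hu, fun g => hg g g.2⟩⟩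

/-- For a closed subgroup G of O(n), n ≥ 2: G acts irreducibly on ℝⁿ iff for every
unit vector v, the orbit Gv is not contained in any closed hemisphere. -/
theorem stmt12 {n : ℕ} (hn : 2 ≤ n) (G : Subgroup (Matrix.orthogonalGroup (Fin n) ℝ))
    (hGcl : IsClosed (G : Set (Matrix.orthogonalGroup (Fin n) ℝ))) :
    (∀ V : Submodule ℝ (EuclideanSpace ℝ (Fin n)),
        (∀ g ∈ G, V.map (Matrix.toEuclideanLin (g : Matrix (Fin n) (Fin n) ℝ)) = V) →
        V = ⊥ ∨ V = ⊤) ↔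
    (∀ v : EuclideanSpace ℝ (Fin n), ‖v‖ = 1 →
      ¬ ∃ u : EuclideanSpace ℝ (Fin n), ‖u‖ = 1 ∧ ∀ g ∈ G, 0 ≤ ⟪act g v, u⟫) :=
  stmt12_general hn G
end
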